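/- arXiv:1904.09343 — 3 statements merged into one kernel-verified Lean document; each statement's English description precedes it below -/
import Mathlib

section
/- Let H be a Hilbert space, D₊ and D₋ closed mutually orthogonal subspaces of H, P⁺ and P⁻ the orthogonal projections onto D₊^⊥ and D₋^⊥ respectively, and (U(t))_{t≥0} a semigroup of bounded operators on H with U(t)D₊ ⊆ D₊ and U(t)*D₋ ⊆ D₋ for all t ≥ 0. Define Z(t) = P⁺∘U(t)∘P⁻ and set K = D₊^⊥ ∩ D₋^⊥. Then Z(t) maps K into K, and the restriction of (Z(t))_{t≥0} to K is a semigroup: Z(t)∘Z(s)φ = Z(t+s)φ for all φ ∈ K and t, s ≥ 0. -/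
/-!
On `K = D₊ᗮ ⊓ D₋ᗮ` we have `Z t = P⁺ ∘ U t`. Since `U t` leaves `D₊` invariant, it leaves
`D₊ᗮᗮ = ker P⁺` invariant (pass twice through the adjoint), which is exactly
`P⁺ ∘ U t ∘ P⁺ = P⁺ ∘ U t`; hence `Z t (Z s φ) = P⁺ (U t (U s φ)) = Z (t + s) φ`.
`K` is invariant because `U t` preserves `D₋ᗮ` (dual to `(U t)† D₋ ⊆ D₋`) and so does `P⁺`,
as `D₋ ≤ D₊ᗮ`.
-/

open Module End Submodule

section InvariantSubspaces

variable {𝕜 E : Type*} [RCLike 𝕜] [NormedAddCommGroup E] [InnerProductSpace 𝕜 E]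

theorem Submodule.orthogonal_mem_invtSubmodule_starProjection {K L : Submodule 𝕜 E}
    [K.HasOrthogonalProjection] (h : L ≤ K) :
    Lᗮ ∈ invtSubmodule K.starProjection.toLinearMap := by
  rw [mem_invtSubmodule_iff_forall_mem_of_mem]
  intro x hx
  have hdiff : K.starProjection x - x ∈ Lᗮ :=
    orthogonal_le h (by simpa using neg_mem (K.sub_starProjection_mem_orthogonal x))
  simpa using add_mem hdiff hx

theorem Submodule.starProjection_comp_comp_starProjection_of_orthogonal_mem_invtSubmodule
    {K : Submodule 𝕜 E} [K.HasOrthogonalProjection] {T : E →L[𝕜] E}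
    (h : Kᗮ ∈ invtSubmodule T.toLinearMap) :
    K.starProjection ∘L T ∘L K.starProjection = K.starProjection ∘L T := by
  have hker : LinearMap.ker K.starProjection.toLinearMap ∈ invtSubmodule T.toLinearMap := by
    simpa using h
  exact ContinuousLinearMap.coe_injective <|
    LinearMap.IsIdempotentElem.conj_eq_of_ker_mem_invtSubmodule
      (ContinuousLinearMap.IsIdempotentElem.toLinearMap K.isIdempotentElem_starProjection) hker

variable [CompleteSpace E]

theorem ContinuousLinearMap.orthogonal_orthogonal_mem_invtSubmodule {T : E →L[𝕜] E}
    {D : Submodule 𝕜 E} (h : D ∈ invtSubmodule T.toLinearMap) :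
    Dᗮᗮ ∈ invtSubmodule T.toLinearMap :=
  ContinuousLinearMap.orthogonal_mem_invtSubmodule <|
    ContinuousLinearMap.orthogonal_mem_invtSubmodule (by rwa [ContinuousLinearMap.adjoint_adjoint])

end InvariantSubspaces

theorem stmt_5_general {H : Type*} [NormedAddCommGroup H] [InnerProductSpace ℝ H]
    [CompleteSpace H]
    (Dp Dm : Submodule ℝ H)
    (horth : ∀ φ ∈ Dp, ∀ ψ ∈ Dm, (inner ℝ φ ψ : ℝ) = 0)
    (U : ℝ → H →L[ℝ] H)
    (hsg : ∀ t ≥ (0:ℝ), ∀ s ≥ (0:ℝ), U (t + s) = (U t).comp (U s))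
    (hUp : ∀ t ≥ (0:ℝ), ∀ φ ∈ Dp, U t φ ∈ Dp)
    (hUm : ∀ t ≥ (0:ℝ), ∀ φ ∈ Dm, ContinuousLinearMap.adjoint (U t) φ ∈ Dm)
    (Z : ℝ → H →L[ℝ] H)
    (hZ : ∀ t, Z t = (Dpᗮ.subtypeL.comp Dpᗮ.orthogonalProjectionOnto).comp
      ((U t).comp (Dmᗮ.subtypeL.comp Dmᗮ.orthogonalProjectionOnto))) :
    (∀ t ≥ (0:ℝ), ∀ φ ∈ Dpᗮ ⊓ Dmᗮ, Z t φ ∈ Dpᗮ ⊓ Dmᗮ) ∧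
      (∀ t ≥ (0:ℝ), ∀ s ≥ (0:ℝ), ∀ φ ∈ Dpᗮ ⊓ Dmᗮ,
        Z t (Z s φ) = Z (t + s) φ) := by
  have hZ_apply : ∀ t, ∀ φ ∈ Dmᗮ, Z t φ = Dpᗮ.starProjection (U t φ) := fun t φ hφ => by
    rw [hZ t]
    exact congrArg (fun x => Dpᗮ.starProjection (U t x)) (starProjection_eq_self_iff.mpr hφ)
  have hUp_inv : ∀ t ≥ (0:ℝ), Dpᗮᗮ ∈ invtSubmodule (U t).toLinearMap := fun t ht =>
    ContinuousLinearMap.orthogonal_orthogonal_mem_invtSubmodule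
      ((mem_invtSubmodule_iff_forall_mem_of_mem _).mpr (hUp t ht))
  have hUm_inv : ∀ t ≥ (0:ℝ), Dmᗮ ∈ invtSubmodule (U t).toLinearMap := fun t ht =>
    ContinuousLinearMap.orthogonal_mem_invtSubmodule
      ((mem_invtSubmodule_iff_forall_mem_of_mem _).mpr (hUm t ht))
  have hDm_le : Dm ≤ Dpᗮ := fun ψ hψ =>
    (mem_orthogonal' Dp ψ).mpr fun φ hφ => by rw [real_inner_comm]; exact horth φ hφ ψ hψ
  have hmem : ∀ t ≥ (0:ℝ), ∀ φ ∈ Dpᗮ ⊓ Dmᗮ, Z t φ ∈ Dpᗮ ⊓ Dmᗮ := by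
    rintro t ht φ ⟨-, hφ⟩
    rw [hZ_apply t φ hφ]
    exact ⟨Dpᗮ.starProjection_apply_mem _,
      orthogonal_mem_invtSubmodule_starProjection hDm_le (hUm_inv t ht hφ)⟩
  refine ⟨hmem, fun t ht s hs φ hφ => ?_⟩
  rw [hZ_apply t _ (hmem s hs φ hφ).2, hZ_apply s φ hφ.2, hZ_apply _ φ hφ.2, hsg t ht s hs]
  exact congr($(starProjection_comp_comp_starProjection_of_orthogonal_mem_invtSubmodule
    (hUp_inv t ht)) (U s φ))

theorem stmt_5 {H : Type*} [NormedAddCommGroup H] [InnerProductSpace ℝ H]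
    [CompleteSpace H]
    (Dp Dm : Submodule ℝ H)
    (hDp : IsClosed (Dp : Set H)) (hDm : IsClosed (Dm : Set H))
    (horth : ∀ φ ∈ Dp, ∀ ψ ∈ Dm, (inner ℝ φ ψ : ℝ) = 0)
    (U : ℝ → H →L[ℝ] H)
    (hsg : ∀ t ≥ (0:ℝ), ∀ s ≥ (0:ℝ), U (t + s) = (U t).comp (U s))
    (hUp : ∀ t ≥ (0:ℝ), ∀ φ ∈ Dp, U t φ ∈ Dp)
    (hUm : ∀ t ≥ (0:ℝ), ∀ φ ∈ Dm, ContinuousLinearMap.adjoint (U t) φ ∈ Dm)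
    (Z : ℝ → H →L[ℝ] H)
    (hZ : ∀ t, Z t = (Dpᗮ.subtypeL.comp Dpᗮ.orthogonalProjectionOnto).comp
      ((U t).comp (Dmᗮ.subtypeL.comp Dmᗮ.orthogonalProjectionOnto))) :
    (∀ t ≥ (0:ℝ), ∀ φ ∈ Dpᗮ ⊓ Dmᗮ, Z t φ ∈ Dpᗮ ⊓ Dmᗮ) ∧
      (∀ t ≥ (0:ℝ), ∀ s ≥ (0:ℝ), ∀ φ ∈ Dpᗮ ⊓ Dmᗮ,
        Z t (Z s φ) = Z (t + s) φ) :=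
  stmt_5_general Dp Dm horth U hsg hUp hUm Z hZ
end

section
/- Let H be a Hilbert space, D₊ and D₋ closed mutually orthogonal subspaces, P⁺ and P⁻ the orthogonal projections onto D₊^⊥ and D₋^⊥, (U(t))_{t≥0} and (U_L(t))_{t≥0} semigroups of bounded operators on H with: U_L(s)(D₋^⊥) ⊆ D₊ for all s ≥ 2R; U(t)(D₋^⊥) ⊆ D₋^⊥ for all t ≥ 0; U(t)D₊ ⊆ D₊ for all t ≥ 0; P⁺φ = 0 for φ ∈ D₊. Set M = U(2R) - U_L(2R) and Z(t) = P⁺U(t)P⁻. Then for all t ≥ 4R, Z(t) = P⁺ ∘ M ∘ U(t - 4R) ∘ M ∘ P⁻. -/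
set_option synthInstance.maxHeartbeats 1000000

theorem map_sub_apply_sub_eq_of_cross_terms {R E F : Type*} [Ring R] [AddCommGroup E]
    [Module R E] [AddCommGroup F] [Module R F] (Q : E →ₗ[R] F) (A B V : E →ₗ[R] E) (x : E)
    (hBA : Q (B (V (A x))) = 0) (hAB : Q (A (V (B x))) = 0) (hBB : Q (B (V (B x))) = 0) :
    Q ((A - B) (V ((A - B) x))) = Q (A (V (A x))) := by
  simp only [LinearMap.sub_apply, map_sub, hBA, hAB, hBB]
  abel

theorem semigroup_apply_add_add {𝕜 E : Type*} [Semiring 𝕜] [AddCommMonoid E] [Module 𝕜 E]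
    [TopologicalSpace E] (U : ℝ → E →L[𝕜] E)
    (hsg : ∀ t ≥ (0:ℝ), ∀ s ≥ (0:ℝ), U (t + s) = (U t).comp (U s))
    {a b c : ℝ} (ha : 0 ≤ a) (hb : 0 ≤ b) (hc : 0 ≤ c) (x : E) :
    U (a + b + c) x = U a (U b (U c x)) := by
  rw [add_assoc, hsg a ha _ (add_nonneg hb hc), hsg b hb c hc]
  rfl

theorem stmt_13_general {H : Type*} [NormedAddCommGroup H] [InnerProductSpace ℝ H]
    [CompleteSpace H]
    (Dp Dm : Submodule ℝ H)
    (horth : ∀ φ ∈ Dp, ∀ ψ ∈ Dm, (inner ℝ φ ψ : ℝ) = 0)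
    (U UL : ℝ → H →L[ℝ] H)
    (hsgU : ∀ t ≥ (0:ℝ), ∀ s ≥ (0:ℝ), U (t + s) = (U t).comp (U s))
    (R : ℝ) (hR : 0 < R)
    (hUL : ∀ s ≥ 2 * R, ∀ φ ∈ Dmᗮ, UL s φ ∈ Dp)
    (hUm : ∀ t ≥ (0:ℝ), ∀ φ ∈ Dmᗮ, U t φ ∈ Dmᗮ)
    (hUp : ∀ t ≥ (0:ℝ), ∀ φ ∈ Dp, U t φ ∈ Dp)
    (hPkill : ∀ φ ∈ Dp, (Dpᗮ.subtypeL.comp (Dpᗮ.orthogonalProjection)) φ = 0)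
    (M : H →L[ℝ] H) (hM : M = U (2 * R) - UL (2 * R)) :
    ∀ t ≥ 4 * R, ∀ φ : H,
      (Dpᗮ.subtypeL.comp (Dpᗮ.orthogonalProjection))
          (U t ((Dmᗮ.subtypeL.comp (Dmᗮ.orthogonalProjection)) φ))
        = (Dpᗮ.subtypeL.comp (Dpᗮ.orthogonalProjection))
            (M (U (t - 4 * R) (M ((Dmᗮ.subtypeL.comp (Dmᗮ.orthogonalProjection)) φ)))) := by
  intro t ht φ
  set ψ := (Dmᗮ.subtypeL.comp (Dmᗮ.orthogonalProjection)) φ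
  have hψ : ψ ∈ Dmᗮ := Submodule.coe_mem _
  have hDp_le : Dp ≤ Dmᗮ := (Submodule.isOrtho_iff_inner_eq.2 horth).le
  have h2R : 0 ≤ 2 * R := by positivity
  have hs : 0 ≤ t - 4 * R := by linarith
  have hLψ : UL (2 * R) ψ ∈ Dp := hUL _ le_rfl _ hψ
  have hUt : U t ψ = U (2 * R) (U (t - 4 * R) (U (2 * R) ψ)) := by
    rw [← semigroup_apply_add_add U hsgU h2R hs h2R]
    ring_nf
  rw [hM, hUt]
  -- Each cross term lies in `Dp`: `UL (2 * R)` maps `Dmᗮ ⊇ Dp` into `Dp`, and `U` preserves both.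
  exact (map_sub_apply_sub_eq_of_cross_terms _ (U (2 * R)).toLinearMap
    (UL (2 * R)).toLinearMap (U (t - 4 * R)).toLinearMap ψ
    (hPkill _ (hUL _ le_rfl _ (hUm _ hs _ (hUm _ h2R _ hψ))))
    (hPkill _ (hUp _ h2R _ (hUp _ hs _ hLψ)))
    (hPkill _ (hUL _ le_rfl _ (hDp_le (hUp _ hs _ hLψ))))).symm

theorem stmt_13 {H : Type*} [NormedAddCommGroup H] [InnerProductSpace ℝ H]
    [CompleteSpace H]
    (Dp Dm : Submodule ℝ H)
    (hDp : IsClosed (Dp : Set H)) (hDm : IsClosed (Dm : Set H))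
    (horth : ∀ φ ∈ Dp, ∀ ψ ∈ Dm, (inner ℝ φ ψ : ℝ) = 0)
    (U UL : ℝ → H →L[ℝ] H)
    (hsgU : ∀ t ≥ (0:ℝ), ∀ s ≥ (0:ℝ), U (t + s) = (U t).comp (U s))
    (hsgUL : ∀ t ≥ (0:ℝ), ∀ s ≥ (0:ℝ), UL (t + s) = (UL t).comp (UL s))
    (R : ℝ) (hR : 0 < R)
    (hUL : ∀ s ≥ 2 * R, ∀ φ ∈ Dmᗮ, UL s φ ∈ Dp)
    (hUm : ∀ t ≥ (0:ℝ), ∀ φ ∈ Dmᗮ, U t φ ∈ Dmᗮ)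
    (hUp : ∀ t ≥ (0:ℝ), ∀ φ ∈ Dp, U t φ ∈ Dp)
    (hPkill : ∀ φ ∈ Dp, (Dpᗮ.subtypeL.comp (Dpᗮ.orthogonalProjection)) φ = 0)
    (M : H →L[ℝ] H) (hM : M = U (2 * R) - UL (2 * R)) :
    ∀ t ≥ 4 * R, ∀ φ : H,
      (Dpᗮ.subtypeL.comp (Dpᗮ.orthogonalProjection))
          (U t ((Dmᗮ.subtypeL.comp (Dmᗮ.orthogonalProjection)) φ))
        = (Dpᗮ.subtypeL.comp (Dpᗮ.orthogonalProjection))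
            (M (U (t - 4 * R) (M ((Dmᗮ.subtypeL.comp (Dmᗮ.orthogonalProjection)) φ)))) :=
  stmt_13_general Dp Dm horth U UL hsgU R hR hUL hUm hUp hPkill M hM
end

section
/- Let θ > 1, a, b > 0 with a < (1 - 1/θ)·(θb)^(-1/(θ-1)). Define g(x) = a + b·x^θ - x for x ≥ 0. Then g has exactly one root x₁ in the interval [0, (θb)^(-1/(θ-1))], g(x) > 0 on [0, x₁), and x₁ ≤ θa/(θ-1). -/
/-!
With `M = (θb)^(-1/(θ-1))` we have `θ b M^(θ-1) = 1`, so `g x = a + b x^θ - x` has derivative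
`θ b x^(θ-1) - 1 < 0` on `(0, M)` and is strictly decreasing on `[0, M]`. Moreover
`b x^θ = b x^(θ-1) · x ≤ x/θ` there, so `g x ≤ a - (1 - 1/θ) x`. This bound is negative at `M`
by the assumption on `a`, which gives the root `x₁` by the intermediate value theorem, and it
vanishes at `θa/(θ-1)`, which gives `x₁ ≤ θa/(θ-1)` by monotonicity.
-/

open Set

lemma StrictAntiOn.exists_zero_of_Icc {f : ℝ → ℝ} {l u : ℝ} (hlu : l ≤ u)
    (hcont : ContinuousOn f (Icc l u)) (hanti : StrictAntiOn f (Icc l u))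
    (hl : 0 ≤ f l) (hu : f u ≤ 0) :
    ∃ x₁ ∈ Icc l u, f x₁ = 0 ∧ (∀ x ∈ Icc l u, f x = 0 → x = x₁) ∧
      ∀ x ∈ Ico l x₁, 0 < f x := by
  obtain ⟨x₁, hx₁, hfx₁⟩ := intermediate_value_Icc' hlu hcont ⟨hu, hl⟩
  refine ⟨x₁, hx₁, hfx₁, fun x hx hfx => ?_, fun x hx => ?_⟩
  · exact (hanti.eq_iff_eq hx₁ hx).mp (hfx₁.trans hfx.symm)
  · rw [← hfx₁]
    exact hanti ⟨hx.1, hx.2.le.trans hx₁.2⟩ hx₁ hx.2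

lemma continuous_add_mul_rpow_sub {θ : ℝ} (hθ : 0 ≤ θ) (a b : ℝ) :
    Continuous (fun x : ℝ => a + b * x ^ θ - x) :=
  (continuous_const.add (continuous_const.mul (Real.continuous_rpow_const hθ))).sub continuous_id

lemma Real.rpow_neg_one_div_rpow {c p : ℝ} (hc : 0 ≤ c) (hp : p ≠ 0) :
    (c ^ (-(1 / p))) ^ p = c⁻¹ := by
  rw [← Real.rpow_mul hc, neg_mul, one_div_mul_cancel hp, Real.rpow_neg_one]

section

variable {θ b : ℝ} (hθ : 1 < θ) (hb : 0 < b)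
include hθ hb

lemma rpow_sub_one_le_inv {x : ℝ} (hx0 : 0 ≤ x) (hx : x ≤ (θ * b) ^ (-(1 / (θ - 1)))) :
    x ^ (θ - 1) ≤ (θ * b)⁻¹ := by
  rw [← Real.rpow_neg_one_div_rpow (by positivity) (sub_ne_zero.mpr hθ.ne')]
  exact Real.rpow_le_rpow hx0 hx (by linarith)

lemma rpow_sub_one_lt_inv {x : ℝ} (hx0 : 0 ≤ x) (hx : x < (θ * b) ^ (-(1 / (θ - 1)))) :
    x ^ (θ - 1) < (θ * b)⁻¹ := by
  rw [← Real.rpow_neg_one_div_rpow (by positivity) (sub_ne_zero.mpr hθ.ne')]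
  exact Real.rpow_lt_rpow hx0 hx (by linarith)

lemma add_mul_rpow_sub_le {x : ℝ} (a : ℝ) (hx0 : 0 ≤ x)
    (hx : x ≤ (θ * b) ^ (-(1 / (θ - 1)))) :
    a + b * x ^ θ - x ≤ a - (1 - 1 / θ) * x := by
  have hsplit : x ^ θ = x ^ (θ - 1) * x := by
    rw [← Real.rpow_add_one' hx0 (by linarith), sub_add_cancel]
  have key : b * x ^ θ ≤ x / θ :=
    calc b * x ^ θ = b * x ^ (θ - 1) * x := by rw [hsplit, mul_assoc]
      _ ≤ b * (θ * b)⁻¹ * x := by gcongr; exact rpow_sub_one_le_inv hθ hb hx0 hx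
      _ = x / θ := by field_simp
  calc a + b * x ^ θ - x ≤ a + x / θ - x := by linarith
    _ = a - (1 - 1 / θ) * x := by ring

lemma strictAntiOn_add_mul_rpow_sub (a : ℝ) :
    StrictAntiOn (fun x => a + b * x ^ θ - x) (Icc 0 ((θ * b) ^ (-(1 / (θ - 1))))) := by
  have hθ0 : 0 < θ := by linarith
  refine strictAntiOn_of_hasDerivWithinAt_neg (convex_Icc _ _)
    (f' := fun x => b * (θ * x ^ (θ - 1)) - 1) ?_ (fun x hx => ?_) (fun x hx => ?_)
  · exact (continuous_add_mul_rpow_sub hθ0.le a b).continuousOn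
  · rw [interior_Icc] at hx
    exact ((((Real.hasDerivAt_rpow_const (Or.inl hx.1.ne')).const_mul b).const_add a).sub
      (hasDerivAt_id x)).hasDerivWithinAt
  · rw [interior_Icc] at hx
    have hlt := rpow_sub_one_lt_inv hθ hb hx.1.le hx.2
    calc b * (θ * x ^ (θ - 1)) - 1 < b * (θ * (θ * b)⁻¹) - 1 := by gcongr
      _ = 0 := by field_simp; ring

end

theorem stmt_15 (θ a b : ℝ) (hθ : 1 < θ) (ha : 0 < a) (hb : 0 < b)
    (hcond : a < (1 - 1 / θ) * (θ * b) ^ (-(1 / (θ - 1)))) :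
    ∃ x₁ : ℝ,
      (x₁ ∈ Set.Icc 0 ((θ * b) ^ (-(1 / (θ - 1)))) ∧ a + b * x₁ ^ θ - x₁ = 0) ∧
      (∀ x ∈ Set.Icc 0 ((θ * b) ^ (-(1 / (θ - 1)))), a + b * x ^ θ - x = 0 → x = x₁) ∧
      (∀ x ∈ Set.Ico 0 x₁, 0 < a + b * x ^ θ - x) ∧
      x₁ ≤ θ * a / (θ - 1) := by
  set M := (θ * b) ^ (-(1 / (θ - 1)))
  have hM : 0 ≤ M := by positivity
  have hanti := strictAntiOn_add_mul_rpow_sub hθ hb a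
  have hg0 : 0 ≤ a + b * 0 ^ θ - 0 := by
    rw [Real.zero_rpow (by linarith)]; linarith
  have hgM : a + b * M ^ θ - M ≤ 0 := by
    linarith [add_mul_rpow_sub_le hθ hb a hM le_rfl]
  obtain ⟨x₁, hx₁, hroot, huniq, hpos⟩ :=
    hanti.exists_zero_of_Icc hM
      (continuous_add_mul_rpow_sub (by linarith) a b).continuousOn hg0 hgM
  refine ⟨x₁, ⟨hx₁, hroot⟩, huniq, hpos, ?_⟩
  set t := θ * a / (θ - 1)
  rcases le_or_gt M t with hMt | htM
  · exact hx₁.2.trans hMt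
  have ht : t ∈ Icc 0 M := ⟨by positivity, htM.le⟩
  have hgt : a + b * t ^ θ - t ≤ 0 := by
    have hzero : a - (1 - 1 / θ) * t = 0 := by
      have : θ - 1 ≠ 0 := by linarith
      simp only [t]; field_simp; ring
    linarith [add_mul_rpow_sub_le hθ hb a ht.1 ht.2]
  exact (hanti.le_iff_ge ht hx₁).mp (hgt.trans_eq hroot.symm)
end
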